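/- arXiv:1504.08092 — 3 statements merged into one kernel-verified Lean document; each statement's English description precedes it below -/
import Mathlib

section
/- Let δ = 1/4 and t_m = 4^{m-1}. Then the generalized Cantor set K = ⋂_{m≥1} K_m, where K_m consists of 2^m intervals of length δ^{t_m} constructed as above, has finite Hausdorff measure with respect to the gauge h(s) = 1/ln(1/s); i.e., there is a constant C < ∞ with H^h(K) ≤ C. -/
open MeasureTheory

/-- Exponents `t 0 = 0`, `t m = 4 ^ (m-1)` for `m ≥ 1`. -/
def cantorT (m : ℕ) : ℕ := if m = 0 then 0 else 4 ^ (m - 1)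

/-- Length `δ ^ t m` of the stage-`m` intervals, with `δ = 1/4`; `ℓ 0 = 1`. -/
noncomputable def cantorLen (m : ℕ) : ℝ := (1 / 4 : ℝ) ^ cantorT m

/-- Left endpoint of the interval of stage `m` determined by the choices `c`. -/
noncomputable def cantorLeft (m : ℕ) (c : Fin m → Bool) : ℝ :=
  ∑ j : Fin m, if c j then cantorLen j - cantorLen (j + 1) else 0

/-- The stage-`m` set: union of `2^m` closed intervals of length `δ ^ t m`. -/
noncomputable def cantorStage (m : ℕ) : Set ℝ :=
  {x | ∃ c : Fin m → Bool, cantorLeft m c ≤ x ∧ x ≤ cantorLeft m c + cantorLen m}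

/-- The generalized Cantor set `K = ⋂ m, K_m` with `δ = 1/4`, `t m = 4^(m-1)`. -/
noncomputable def cantorSetK : Set ℝ := ⋂ m, cantorStage m

/-- The Hausdorff-type measure with gauge `h s = (log (1/s))⁻¹`. -/
noncomputable def gaugeMeasure : Measure ℝ :=
  Measure.mkMetric (fun r : ENNReal =>
    if r = 0 then 0 else ENNReal.ofReal (Real.log (1 / r.toReal))⁻¹)

/-!
Cover `K` by the `2^m` intervals of stage `m`. Each has length `4^(-t_m)`, hence gauge
`h = 1 / (t_m log 4)`, so the stage-`m` cover costs `2^m / (t_m log 4) ≤ 2 / log 4`. Since the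
lengths tend to `0`, this uniform bound on the cost of arbitrarily fine covers bounds `H^h(K)`.
-/

open Filter Topology
open scoped ENNReal

lemma cantorLen_pos (m : ℕ) : 0 < cantorLen m := by
  unfold cantorLen; positivity

lemma cantorT_pos {m : ℕ} (hm : 0 < m) : 0 < cantorT m := by
  rw [cantorT, if_neg hm.ne']; positivity

lemma cantorT_strictMono : StrictMono cantorT := by
  intro a b hab
  rcases Nat.eq_zero_or_pos a with rfl | ha
  · simpa [cantorT] using cantorT_pos hab
  · rw [cantorT, cantorT, if_neg ha.ne', if_neg (ha.trans hab).ne']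
    exact Nat.pow_lt_pow_right (by norm_num) (by omega)

lemma two_pow_le_two_mul_cantorT {m : ℕ} (hm : 0 < m) : (2 : ℝ) ^ m ≤ 2 * cantorT m := by
  obtain ⟨k, rfl⟩ := Nat.exists_eq_add_of_le' hm
  have h : (2 : ℝ) ^ k ≤ 4 ^ k := pow_le_pow_left₀ (by norm_num) (by norm_num) k
  simp only [cantorT, Nat.add_sub_cancel, if_neg (Nat.succ_ne_zero k)]
  push_cast
  rw [pow_succ]
  linarith

lemma tendsto_cantorLen_atTop : Tendsto cantorLen atTop (𝓝 0) :=
  (_root_.tendsto_pow_atTop_nhds_zero_of_lt_one (by norm_num) (by norm_num)).comp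
    cantorT_strictMono.tendsto_atTop

lemma log_one_div_cantorLen (m : ℕ) : Real.log (1 / cantorLen m) = cantorT m * Real.log 4 := by
  rw [cantorLen, one_div, ← inv_pow, one_div, inv_inv, Real.log_pow]

noncomputable def cantorInterval (m : ℕ) (c : Fin m → Bool) : Set ℝ :=
  Set.Icc (cantorLeft m c) (cantorLeft m c + cantorLen m)

lemma ediam_cantorInterval (m : ℕ) (c : Fin m → Bool) :
    Metric.ediam (cantorInterval m c) = ENNReal.ofReal (cantorLen m) := by
  simp [cantorInterval, Real.ediam_Icc]

lemma cantorStage_eq_iUnion_cantorInterval (m : ℕ) :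
    cantorStage m = ⋃ c, cantorInterval m c := by
  ext x
  simp [cantorStage, cantorInterval]

noncomputable def logGauge (r : ℝ≥0∞) : ℝ≥0∞ :=
  if r = 0 then 0 else ENNReal.ofReal (Real.log (1 / r.toReal))⁻¹

lemma gaugeMeasure_eq_mkMetric_logGauge : gaugeMeasure = Measure.mkMetric logGauge := rfl

lemma logGauge_ofReal {r : ℝ} (hr : 0 < r) :
    logGauge (ENNReal.ofReal r) = ENNReal.ofReal (Real.log (1 / r))⁻¹ := by
  rw [logGauge, if_neg (by simpa using hr), ENNReal.toReal_ofReal hr.le]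

lemma logGauge_ediam_cantorInterval (m : ℕ) (c : Fin m → Bool) :
    logGauge (Metric.ediam (cantorInterval m c)) = ENNReal.ofReal (cantorT m * Real.log 4)⁻¹ := by
  rw [ediam_cantorInterval, logGauge_ofReal (cantorLen_pos m), log_one_div_cantorLen]

lemma sum_logGauge_ediam_cantorInterval_le {m : ℕ} (hm : 0 < m) :
    ∑ c : Fin m → Bool, logGauge (Metric.ediam (cantorInterval m c)) ≤
      ENNReal.ofReal (2 / Real.log 4) := by
  have hlog4 : 0 < Real.log 4 := Real.log_pos (by norm_num)
  have hT : (0 : ℝ) < cantorT m := by exact_mod_cast cantorT_pos hm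
  simp only [logGauge_ediam_cantorInterval, Finset.sum_const, Finset.card_univ,
    Fintype.card_fun, Fintype.card_bool, Fintype.card_fin, nsmul_eq_mul]
  rw [← ENNReal.ofReal_natCast, ← ENNReal.ofReal_mul (by positivity)]
  apply ENNReal.ofReal_le_ofReal
  calc ((2 ^ m : ℕ) : ℝ) * (cantorT m * Real.log 4)⁻¹
      = (2 ^ m / cantorT m) / Real.log 4 := by push_cast; field_simp
    _ ≤ 2 / Real.log 4 := by
      gcongr
      rw [div_le_iff₀ hT]
      exact two_pow_le_two_mul_cantorT hm

/-- the generalized Cantor set with `δ = 1/4`, `t m = 4^(m-1)` has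
finite Hausdorff measure with respect to the gauge `h s = 1 / log (1/s)`. -/
theorem cantorSetK_gaugeMeasure_finite :
    ∃ C : ENNReal, C < ⊤ ∧ gaugeMeasure cantorSetK ≤ C := by
  refine ⟨ENNReal.ofReal (2 / Real.log 4), ENNReal.ofReal_lt_top, ?_⟩
  rw [gaugeMeasure_eq_mkMetric_logGauge]
  have hcover : Measure.mkMetric logGauge cantorSetK ≤
      liminf (fun m ↦ ∑ c, logGauge (Metric.ediam (cantorInterval m c))) atTop := by
    refine Measure.mkMetric_le_liminf_sum _ _
      (ENNReal.ofReal_zero ▸ ENNReal.tendsto_ofReal tendsto_cantorLen_atTop) _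
      (Eventually.of_forall fun m c ↦ (ediam_cantorInterval m c).le)
      (Eventually.of_forall fun m ↦ ?_) _
    rw [← cantorStage_eq_iUnion_cantorInterval]
    exact Set.iInter_subset _ m
  refine hcover.trans (liminf_le_of_frequently_le' (frequently_atTop.2 fun a ↦ ?_))
  exact ⟨a + 1, a.le_succ, sum_logGauge_ediam_cantorInterval_le a.succ_pos⟩
end

section
/- Let μ be a probability measure on ℂ whose support is contained in [0,1], let z⁰ ∈ ℂ with Re z⁰ ≤ 0, and set λ = dist(z⁰, supp μ) = |z⁰| (attained at 0). Then for all t ≥ λ one has μ({w : |w| ≤ t − λ}) ≤ μ({w : |w − z⁰| ≤ t}) ≤ μ({w : |w| ≤ √(t² − λ²)}). -/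
open MeasureTheory

/-! The lower bound is the triangle inequality. For the upper bound, a point `w` of `[0,1]` and
`z⁰` make an obtuse angle at `0` (as `Re z⁰ ≤ 0`), so `|w|² + |z⁰|² ≤ |w - z⁰|²`; hence every
point of the support in the disk `|w - z⁰| ≤ t` lies in the disk `|w| ≤ √(t² - |z⁰|²)`. -/

section InnerProductSpace

variable {E : Type*} [NormedAddCommGroup E] [InnerProductSpace ℝ E]

theorem sq_norm_add_sq_norm_le_sq_norm_sub {x y : E} (h : inner ℝ x y ≤ 0) :
    ‖x‖ ^ 2 + ‖y‖ ^ 2 ≤ ‖x - y‖ ^ 2 := by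
  rw [norm_sub_sq_real]
  linarith

theorem norm_le_sqrt_of_inner_nonpos_of_norm_sub_le {x y : E} {t : ℝ} (h : inner ℝ x y ≤ 0)
    (hxy : ‖x - y‖ ≤ t) : ‖x‖ ≤ √(t ^ 2 - ‖y‖ ^ 2) := by
  apply Real.le_sqrt_of_sq_le
  have hsq : ‖x - y‖ ^ 2 ≤ t ^ 2 := pow_le_pow_left₀ (norm_nonneg _) hxy 2
  linarith [sq_norm_add_sq_norm_le_sq_norm_sub h]

end InnerProductSpace

theorem Complex.inner_nonpos_of_im_eq_zero {w z : ℂ} (hw_im : w.im = 0) (hw_re : 0 ≤ w.re)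
    (hz : z.re ≤ 0) : inner ℝ w z ≤ 0 := by
  simp only [Complex.inner, Complex.mul_re, Complex.conj_re, Complex.conj_im, hw_im]
  nlinarith

theorem disk_mass_comparison_general (μ : Measure ℂ)
    (hsupp : μ {z : ℂ | ¬(z.im = 0 ∧ 0 ≤ z.re ∧ z.re ≤ 1)} = 0)
    (z0 : ℂ) (hre : z0.re ≤ 0) (t : ℝ) :
    μ {w : ℂ | ‖w‖ ≤ t - ‖z0‖}
        ≤ μ {w : ℂ | ‖w - z0‖ ≤ t} ∧
    μ {w : ℂ | ‖w - z0‖ ≤ t}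
        ≤ μ {w : ℂ | ‖w‖ ≤ Real.sqrt (t ^ 2 - ‖z0‖ ^ 2)} := by
  refine ⟨measure_mono fun w (hw : ‖w‖ ≤ t - ‖z0‖) => ?_, measure_mono_ae ?_⟩
  · show ‖w - z0‖ ≤ t
    linarith [norm_sub_le w z0]
  · filter_upwards [ae_iff.mpr hsupp] with w ⟨hw_im, hw_re, _⟩ (hw : ‖w - z0‖ ≤ t)
    exact norm_le_sqrt_of_inner_nonpos_of_norm_sub_le
      (Complex.inner_nonpos_of_im_eq_zero hw_im hw_re hre) hw

/-- if `μ` is a probability measure on `ℂ` supported in the segment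
`[0,1] ⊂ ℝ ⊂ ℂ` and `Re z⁰ ≤ 0`, so that `λ = dist(z⁰, supp μ) = |z⁰|`, then for
all `t ≥ λ`,
`μ{|w| ≤ t − λ} ≤ μ{|w − z⁰| ≤ t} ≤ μ{|w| ≤ √(t² − λ²)}`. -/
theorem disk_mass_comparison (μ : Measure ℂ) [IsProbabilityMeasure μ]
    (hsupp : μ {z : ℂ | ¬(z.im = 0 ∧ 0 ≤ z.re ∧ z.re ≤ 1)} = 0)
    (z0 : ℂ) (hre : z0.re ≤ 0) (t : ℝ) (ht : ‖z0‖ ≤ t) :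
    μ {w : ℂ | ‖w‖ ≤ t - ‖z0‖}
        ≤ μ {w : ℂ | ‖w - z0‖ ≤ t} ∧
    μ {w : ℂ | ‖w - z0‖ ≤ t}
        ≤ μ {w : ℂ | ‖w‖ ≤ Real.sqrt (t ^ 2 - ‖z0‖ ^ 2)} :=
  disk_mass_comparison_general μ hsupp z0 hre t
end

section
/- Let p be a polynomial on ℂⁿ of degree k ≥ 1 with p(0) ≠ 0, and let A = {z ∈ ℂⁿ : p(z) = 0}. Then the function ρ(z) = −(1/deg p)·ln|p(z)| + 2·ln|z| is an exhaustion function for X = ℂⁿ \ A, i.e. ρ is defined and continuous on X \ {0} and for every C ∈ ℝ the sublevel set {z ∈ X : ρ(z) < C} is relatively compact in X. -/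
/-!
On the sublevel set `{ρ < C}` one has `‖z‖ ^ (2k) ≤ e^{kC} ‖p(z)‖`, and the set `T` of all `z`
satisfying this inequality is closed. Comparing with `‖p(z)‖ ≤ M · max(1, ‖z‖) ^ k` shows that
`T` is bounded, hence compact. On `T` a zero of `p` is forced to be `z = 0`, which is excluded
by `p(0) ≠ 0`; so the closure of the sublevel set lies in `T ⊆ {p ≠ 0}`.
-/

open Real

namespace MvPolynomial

theorem norm_eval_le_sum_norm_coeff_mul_pow {σ 𝕜 : Type*} [NormedField 𝕜]
    (p : MvPolynomial σ 𝕜) {x : σ → 𝕜} {r : ℝ} (hr : 1 ≤ r) (hx : ∀ i, ‖x i‖ ≤ r) :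
    ‖eval x p‖ ≤ (∑ d ∈ p.support, ‖p.coeff d‖) * r ^ p.totalDegree := by
  rw [eval_eq, Finset.sum_mul]
  refine (norm_sum_le _ _).trans (Finset.sum_le_sum fun d hd => ?_)
  rw [norm_mul]
  gcongr
  calc ‖∏ i ∈ d.support, x i ^ d i‖
      = ∏ i ∈ d.support, ‖x i‖ ^ d i := by simp only [norm_prod, norm_pow]
    _ ≤ ∏ i ∈ d.support, r ^ d i := by gcongr with i; exact hx i
    _ = r ^ (∑ i ∈ d.support, d i) := Finset.prod_pow_eq_pow_sum _ _ _
    _ ≤ r ^ p.totalDegree := pow_le_pow_right₀ hr (le_totalDegree hd)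

theorem norm_eval_euclidean_le {n : ℕ} (p : MvPolynomial (Fin n) ℂ)
    (z : EuclideanSpace ℂ (Fin n)) :
    ‖eval (fun i => z i) p‖ ≤ (∑ d ∈ p.support, ‖p.coeff d‖) * max 1 ‖z‖ ^ p.totalDegree :=
  p.norm_eval_le_sum_norm_coeff_mul_pow (le_max_left _ _)
    fun i => (PiLp.norm_apply_le z i).trans (le_max_right _ _)

theorem continuous_eval_euclidean {n : ℕ} (p : MvPolynomial (Fin n) ℂ) :
    Continuous fun z : EuclideanSpace ℂ (Fin n) => eval (fun i => z i) p :=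
  p.continuous_eval.comp (PiLp.continuous_ofLp 2 _)

end MvPolynomial

theorem pow_lt_exp_mul_of_neg_inv_mul_log_add_two_mul_log_lt {a b C : ℝ} {k : ℕ}
    (hk : 0 < k) (ha : 0 < a) (hb : 0 < b)
    (h : -((k : ℝ)⁻¹ * log a) + 2 * log b < C) :
    b ^ (2 * k) < exp (k * C) * a := by
  have hk' : (0 : ℝ) < k := by exact_mod_cast hk
  rw [← log_lt_log_iff (by positivity) (by positivity), log_pow, log_mul (by positivity) ha.ne',
    log_exp]
  push_cast
  have := mul_lt_mul_of_pos_left h hk'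
  rw [mul_add, ← mul_assoc, mul_neg, ← mul_assoc, mul_inv_cancel₀ hk'.ne'] at this
  linarith

section Exhaustion

variable {E F : Type*} [NormedAddCommGroup E] [NormedAddCommGroup F]

theorem setOf_log_sublevel_subset (f : E → F) {k : ℕ} (hk : 0 < k) (C : ℝ) :
    {z | f z ≠ 0 ∧ z ≠ 0 ∧ -((k : ℝ)⁻¹ * log ‖f z‖) + 2 * log ‖z‖ < C} ⊆
      {z | ‖z‖ ^ (2 * k) ≤ exp (k * C) * ‖f z‖} :=
  fun _ ⟨hf, hz, h⟩ =>
    (pow_lt_exp_mul_of_neg_inv_mul_log_add_two_mul_log_lt hk (norm_pos_iff.2 hf)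
      (norm_pos_iff.2 hz) h).le

theorem setOf_pow_le_exp_mul_norm_subset {f : E → F} (h0 : f 0 ≠ 0) (k : ℕ) (C : ℝ) :
    {z | ‖z‖ ^ (2 * k) ≤ exp (k * C) * ‖f z‖} ⊆ {z | f z ≠ 0} := by
  intro z hz hfz
  rw [Set.mem_ofPred_eq, hfz, norm_zero, mul_zero] at hz
  have : z = 0 := norm_eq_zero.1 (eq_zero_of_pow_eq_zero (le_antisymm hz (by positivity)))
  exact h0 (this ▸ hfz)

theorem isCompact_setOf_pow_le_exp_mul_norm [ProperSpace E] {f : E → F} (hf : Continuous f)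
    {k : ℕ} (hk : 0 < k) {M : ℝ} (hM : ∀ z, ‖f z‖ ≤ M * max 1 ‖z‖ ^ k) (C : ℝ) :
    IsCompact {z | ‖z‖ ^ (2 * k) ≤ exp (k * C) * ‖f z‖} := by
  refine Metric.isCompact_of_isClosed_isBounded
    (isClosed_le (by fun_prop) (by fun_prop)) ?_
  refine (Metric.isBounded_closedBall (x := 0) (r := max 1 (exp (k * C) * M))).subset ?_
  intro z hz
  rw [Set.mem_ofPred_eq] at hz
  rw [Metric.mem_closedBall, dist_zero_right]
  rcases le_or_gt ‖z‖ 1 with h1 | h1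
  · exact h1.trans (le_max_left _ _)
  have hzk : 0 < ‖z‖ ^ k := by positivity
  have : ‖z‖ ^ k * ‖z‖ ^ k ≤ exp (k * C) * M * ‖z‖ ^ k := by
    calc ‖z‖ ^ k * ‖z‖ ^ k = ‖z‖ ^ (2 * k) := by ring
      _ ≤ exp (k * C) * ‖f z‖ := hz
      _ ≤ exp (k * C) * (M * ‖z‖ ^ k) := by
        gcongr; simpa [max_eq_right h1.le] using hM z
      _ = exp (k * C) * M * ‖z‖ ^ k := by ring
  calc ‖z‖ ≤ ‖z‖ ^ k := le_self_pow₀ h1.le hk.ne'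
    _ ≤ exp (k * C) * M := le_of_mul_le_mul_right this hzk
    _ ≤ _ := le_max_right _ _

end Exhaustion

/-- for a polynomial `p` on `ℂⁿ` of degree `k ≥ 1` with `p(0) ≠ 0` and
`A = {p = 0}`, the function `ρ(z) = −(1/deg p)·ln|p(z)| + 2·ln‖z‖` is an exhaustion
function for `X = ℂⁿ \ A`: it is continuous on `X \ {0}` and each sublevel set
`{z ∈ X : z ≠ 0, ρ(z) < C}` is relatively compact in `X` (its closure in `ℂⁿ` is
compact and contained in `X`). -/
theorem complement_of_zero_set_exhaustion (n : ℕ) (p : MvPolynomial (Fin n) ℂ)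
    (hd : 1 ≤ p.totalDegree)
    (h0 : MvPolynomial.eval (fun i => (0 : EuclideanSpace ℂ (Fin n)) i) p ≠ 0) :
    ContinuousOn
        (fun z : EuclideanSpace ℂ (Fin n) =>
          -(((p.totalDegree : ℝ))⁻¹ *
              Real.log ‖MvPolynomial.eval (fun i => z i) p‖)
            + 2 * Real.log ‖z‖)
        ({z | MvPolynomial.eval (fun i => z i) p ≠ 0} \ {0}) ∧
    ∀ C : ℝ,
      IsCompact (closure {z : EuclideanSpace ℂ (Fin n) |
          MvPolynomial.eval (fun i => z i) p ≠ 0 ∧ z ≠ 0 ∧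
          -(((p.totalDegree : ℝ))⁻¹ *
              Real.log ‖MvPolynomial.eval (fun i => z i) p‖)
            + 2 * Real.log ‖z‖ < C}) ∧
      closure {z : EuclideanSpace ℂ (Fin n) |
          MvPolynomial.eval (fun i => z i) p ≠ 0 ∧ z ≠ 0 ∧
          -(((p.totalDegree : ℝ))⁻¹ *
              Real.log ‖MvPolynomial.eval (fun i => z i) p‖)
            + 2 * Real.log ‖z‖ < C}
        ⊆ {z | MvPolynomial.eval (fun i => z i) p ≠ 0} := by
  have hf := p.continuous_eval_euclidean
  refine ⟨fun z ⟨hpz, hz⟩ => ?_, fun C => ?_⟩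
  · have hz : z ≠ 0 := hz
    have hlogp := hf.norm.continuousAt.log (norm_ne_zero_iff.2 hpz)
    have hlogz := continuous_norm.continuousAt.log (norm_ne_zero_iff.2 hz)
    exact ((hlogp.const_mul _).neg.add (hlogz.const_mul 2)).continuousWithinAt
  · have hT := isCompact_setOf_pow_le_exp_mul_norm hf hd p.norm_eval_euclidean_le C
    have hS := closure_minimal (setOf_log_sublevel_subset _ hd C) hT.isClosed
    exact ⟨hT.of_isClosed_subset isClosed_closure hS,
      hS.trans (setOf_pow_le_exp_mul_norm_subset h0 _ C)⟩
end
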